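/- Let A be an m × n matrix with full column rank and rows a_1, …, a_m all nonzero. For a consistent system Ax = b with solution x_*, the randomized Kaczmarz update x_{k+1} = x_k + (b_i − ⟨a_i, x_k⟩)/‖a_i‖₂² · a_i, with row index i chosen with probability ‖a_i‖₂²/‖A‖_F², satisfies E[‖x_{k+1} − x_*‖₂² | x_k] ≤ (1 − σ_min²(A)/‖A‖_F²)·‖x_k − x_*‖₂². -/

import Mathlib

open MeasureTheory ProbabilityTheory Real

/-- Squared Euclidean norm of a vector. -/
noncomputable def norm2sq {n : ℕ} (u : Fin n → ℝ) : ℝ := ∑ i, u i ^ 2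

/-- Squared Frobenius norm of a matrix. -/
noncomputable def frobSq {m n : ℕ} (A : Matrix (Fin m) (Fin n) ℝ) : ℝ := ∑ i, ∑ j, A i j ^ 2

/-- Squared smallest singular value: infimum of `‖A u‖₂²` over unit vectors `u`. -/
noncomputable def sminSq {m n : ℕ} (A : Matrix (Fin m) (Fin n) ℝ) : ℝ :=
  sInf {r | ∃ u : Fin n → ℝ, norm2sq u = 1 ∧ r = norm2sq (A.mulVec u)}

/-- Sup (infinity) norm of a vector. -/
noncomputable def supNorm {s : ℕ} (u : Fin s → ℝ) : ℝ := ⨆ j, |u j|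

/-! A Kaczmarz step projects `x_k` orthogonally onto the hyperplane `⟨a_i, y⟩ = b_i`, which
contains `x_*`, so by Pythagoras the squared error drops by `⟨a_i, x_k - x_*⟩² / ‖a_i‖²`.
With the weights `‖a_i‖² / ‖A‖_F²` the expected drop is `‖A (x_k - x_*)‖² / ‖A‖_F²`, and this
is at least `σ_min²(A) ‖x_k - x_*‖² / ‖A‖_F²`. -/

open Matrix

section

variable {n : ℕ}

lemma norm2sq_eq_dotProduct (u : Fin n → ℝ) : norm2sq u = u ⬝ᵥ u := by
  simp only [norm2sq, dotProduct, sq]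

lemma norm2sq_nonneg (u : Fin n → ℝ) : 0 ≤ norm2sq u :=
  Finset.sum_nonneg fun _ _ => sq_nonneg _

lemma norm2sq_smul (c : ℝ) (u : Fin n → ℝ) : norm2sq (c • u) = c ^ 2 * norm2sq u := by
  simp only [norm2sq, Pi.smul_apply, smul_eq_mul, mul_pow, Finset.mul_sum]

lemma sminSq_mul_norm2sq_le {m : ℕ} (A : Matrix (Fin m) (Fin n) ℝ) (e : Fin n → ℝ) :
    sminSq A * norm2sq e ≤ norm2sq (A *ᵥ e) := by
  rcases (norm2sq_nonneg e).eq_or_lt with he | he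
  · rw [← he, mul_zero]
    exact norm2sq_nonneg _
  set c := (√(norm2sq e))⁻¹
  have hc : c ^ 2 = (norm2sq e)⁻¹ := by rw [inv_pow, sq_sqrt he.le]
  have hbdd : BddBelow {r | ∃ u : Fin n → ℝ, norm2sq u = 1 ∧ r = norm2sq (A *ᵥ u)} :=
    ⟨0, by rintro _ ⟨u, -, rfl⟩; exact norm2sq_nonneg _⟩
  have hunit : norm2sq (c • e) = 1 := by rw [norm2sq_smul, hc, inv_mul_cancel₀ he.ne']
  have hle : sminSq A ≤ norm2sq (A *ᵥ e) / norm2sq e := by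
    refine csInf_le hbdd ⟨c • e, hunit, ?_⟩
    rw [mulVec_smul, norm2sq_smul, hc, inv_mul_eq_div]
  rwa [le_div_iff₀ he] at hle

noncomputable def kaczmarzStep (a : Fin n → ℝ) (β : ℝ) (x : Fin n → ℝ) : Fin n → ℝ :=
  x + ((β - a ⬝ᵥ x) / norm2sq a) • a

lemma kaczmarzStep_sub {a xstar : Fin n → ℝ} {β : ℝ} (hβ : a ⬝ᵥ xstar = β) (x : Fin n → ℝ) :
    kaczmarzStep a β x - xstar = (x - xstar) - (a ⬝ᵥ (x - xstar) / norm2sq a) • a := by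
  rw [kaczmarzStep, ← hβ, dotProduct_sub, ← neg_sub (a ⬝ᵥ x), neg_div, neg_smul]
  abel

-- Pythagoras, multiplied through by `‖a‖²` so that it also holds for `a = 0`.
lemma norm2sq_mul_norm2sq_sub_proj (a e : Fin n → ℝ) :
    norm2sq a * norm2sq (e - (a ⬝ᵥ e / norm2sq a) • a) =
      norm2sq a * norm2sq e - (a ⬝ᵥ e) ^ 2 := by
  by_cases ha : a = 0
  · simp [ha, norm2sq]
  have hS : a ⬝ᵥ a ≠ 0 := fun h => ha (dotProduct_self_eq_zero.mp h)
  simp only [norm2sq_eq_dotProduct, dotProduct_sub, sub_dotProduct, dotProduct_smul,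
    smul_dotProduct, smul_eq_mul, dotProduct_comm e a]
  field_simp
  ring

lemma norm2sq_mul_norm2sq_kaczmarzStep_sub {a xstar : Fin n → ℝ} {β : ℝ}
    (hβ : a ⬝ᵥ xstar = β) (x : Fin n → ℝ) :
    norm2sq a * norm2sq (kaczmarzStep a β x - xstar) =
      norm2sq a * norm2sq (x - xstar) - (a ⬝ᵥ (x - xstar)) ^ 2 := by
  rw [kaczmarzStep_sub hβ, norm2sq_mul_norm2sq_sub_proj]

end

lemma frobSq_eq_sum_norm2sq {m n : ℕ} (A : Matrix (Fin m) (Fin n) ℝ) :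
    frobSq A = ∑ i, norm2sq (A i) := rfl

theorem randomized_kaczmarz_one_step_general
    {m n : ℕ} (A : Matrix (Fin m) (Fin n) ℝ)
    (b : Fin m → ℝ) (xstar : Fin n → ℝ) (hsol : A.mulVec xstar = b)
    (xk : Fin n → ℝ) :
    ∑ i : Fin m, (norm2sq (fun l => A i l) / frobSq A) *
        norm2sq (fun t =>
          (xk t + (b i - ∑ l, A i l * xk l) / norm2sq (fun l => A i l) * A i t) - xstar t) ≤
      (1 - sminSq A / frobSq A) * norm2sq (fun t => xk t - xstar t) := by
  by_cases hF : frobSq A = 0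
  · simp [hF, norm2sq_nonneg]
  change ∑ i, (norm2sq (A i) / frobSq A) * norm2sq (kaczmarzStep (A i) (b i) xk - xstar) ≤
    (1 - sminSq A / frobSq A) * norm2sq (xk - xstar)
  have hrow : ∀ i, A i ⬝ᵥ xstar = b i := fun i => congrFun hsol i
  calc ∑ i, (norm2sq (A i) / frobSq A) * norm2sq (kaczmarzStep (A i) (b i) xk - xstar)
      = (frobSq A * norm2sq (xk - xstar) - norm2sq (A *ᵥ (xk - xstar))) / frobSq A := by
        simp_rw [div_mul_eq_mul_div, ← Finset.sum_div,
          norm2sq_mul_norm2sq_kaczmarzStep_sub (hrow _), Finset.sum_sub_distrib,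
          ← Finset.sum_mul, frobSq_eq_sum_norm2sq]
        rfl
    _ ≤ (frobSq A * norm2sq (xk - xstar) - sminSq A * norm2sq (xk - xstar)) / frobSq A := by
        gcongr
        · exact Finset.sum_nonneg fun _ _ => norm2sq_nonneg _
        · exact sminSq_mul_norm2sq_le A _
    _ = (1 - sminSq A / frobSq A) * norm2sq (xk - xstar) := by
        field_simp

/-- Strohmer–Vershynin single-step contraction for randomized Kaczmarz: choosing row `i`
with probability `‖a_i‖₂²/‖A‖_F²`, the expected squared error contracts by the factor
`1 − σ_min²(A)/‖A‖_F²`. -/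
theorem randomized_kaczmarz_one_step
    {m n : ℕ} (A : Matrix (Fin m) (Fin n) ℝ) (hrank : A.rank = n)
    (hrows : ∀ j : Fin m, (fun l => A j l) ≠ 0)
    (b : Fin m → ℝ) (xstar : Fin n → ℝ) (hsol : A.mulVec xstar = b)
    (xk : Fin n → ℝ) :
    ∑ i : Fin m, (norm2sq (fun l => A i l) / frobSq A) *
        norm2sq (fun t =>
          (xk t + (b i - ∑ l, A i l * xk l) / norm2sq (fun l => A i l) * A i t) - xstar t) ≤
      (1 - sminSq A / frobSq A) * norm2sq (fun t => xk t - xstar t) :=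
  randomized_kaczmarz_one_step_general A b xstar hsol xk
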